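/- arXiv:1005.2892 — 3 statements merged into one kernel-verified Lean document; each statement's English description precedes it below -/
import Mathlib

section
/- Let G be a finite group, N ⊴ G a normal subgroup, and M an irreducible complex representation of G with character χ. If the restriction of M to N, tensored appropriately, is such that N acts trivially on some tensor power M^{⊗n}, then the restriction χ|_N = χ(1)·ψ for a single G-stable linear character ψ of N. -/
/-!
For `m ∈ N` the hypothesis forces `‖χ m‖ = χ 1 = dim V`. As `ρ m` has finite order, it is
semisimple with eigenvalues on the unit circle, and their sum `χ m` has norm `dim V` only if they
all coincide (equality in the triangle inequality); so `ρ m` is a scalar `ψ m`. Scalars multiply,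
hence `ψ` is a character of `N`, and it is `G`-stable because `χ` is a class function.
-/

open CategoryTheory Polynomial

theorem Multiset.eq_replicate_of_norm_sum_eq_card {E : Type*} [NormedAddCommGroup E]
    [NormedSpace ℝ E] [StrictConvexSpace ℝ E] {s : Multiset E} (hs : ∀ a ∈ s, ‖a‖ = 1)
    (hsum : ‖s.sum‖ = card s) : ∃ c, s = replicate (card s) c := by
  induction s using Multiset.induction with
  | empty => exact ⟨0, rfl⟩
  | cons b t ih =>
    have hb : ‖b‖ = 1 := hs b (mem_cons_self b t)
    have ht : ∀ a ∈ t, ‖a‖ = 1 := fun a ha ↦ hs a (mem_cons_of_mem ha)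
    have hle : ‖t.sum‖ ≤ card t := by
      simpa [Multiset.map_congr rfl ht] using norm_multiset_sum_le t
    rw [sum_cons, card_cons, Nat.cast_succ] at hsum
    have htri := norm_add_le b t.sum
    have htsum : ‖t.sum‖ = card t := by linarith
    obtain ⟨c, htc⟩ := ih ht htsum
    generalize card t = k at htc
    subst htc
    rw [card_replicate] at hsum htsum
    rcases k.eq_zero_or_pos with hk | hk
    · exact ⟨b, by simp [hk]⟩
    refine ⟨c, ?_⟩
    have hc : ‖c‖ = 1 := ht c (mem_replicate.2 ⟨hk.ne', rfl⟩)
    have hray : SameRay ℝ b ((k : ℝ) • c) := by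
      rw [sameRay_iff_norm_add, Nat.cast_smul_eq_nsmul, ← sum_replicate]
      linarith
    have hbc : SameRay ℝ b c := by
      simpa [smul_smul, hk.ne'] using hray.pos_smul_right (a := (k : ℝ)⁻¹) (by positivity)
    simp [hbc.eq_of_norm_eq (hb.trans hc.symm), replicate_succ]

namespace Module.End

section Field

variable {K V : Type*} [Field K] [AddCommGroup V] [Module K V] {f : End K V} {e : ℕ}

theorem isSemisimple_of_pow_eq_one (he : (e : K) ≠ 0) (hf : f ^ e = 1) : f.IsSemisimple :=
  isSemisimple_of_squarefree_aeval_eq_zero (X_pow_sub_one_separable_iff.2 he).squarefree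
    (by simp [hf])

theorem HasEigenvalue.pow_eq_one_of_pow_eq_one {μ : K} (hμ : f.HasEigenvalue μ)
    (hf : f ^ e = 1) : μ ^ e = 1 := by
  obtain ⟨v, hv⟩ := (hf ▸ hμ.pow e).exists_hasEigenvector
  have h := hv.apply_eq_smul
  rw [one_apply] at h
  exact smul_left_injective K hv.2 (by simpa using h.symm)

end Field

theorem exists_eq_algebraMap_of_pow_eq_one_of_norm_trace {V : Type*} [AddCommGroup V]
    [Module ℂ V] [FiniteDimensional ℂ V] {f : End ℂ V} {e : ℕ} (he : e ≠ 0) (hf : f ^ e = 1)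
    (htr : ‖LinearMap.trace ℂ V f‖ = finrank ℂ V) :
    ∃ c : ℂ, f = algebraMap ℂ (End ℂ V) c := by
  have hsplit : f.charpoly.Splits := IsAlgClosed.splits _
  have hcard : Multiset.card f.charpoly.roots = finrank ℂ V := by
    rw [splits_iff_card_roots.1 hsplit, LinearMap.charpoly_natDegree]
  have hnorm : ∀ μ ∈ f.charpoly.roots, ‖μ‖ = 1 := fun μ hμ ↦
    Complex.norm_eq_one_of_pow_eq_one (((hasEigenvalue_iff_isRoot_charpoly f μ).2
      (isRoot_of_mem_roots hμ)).pow_eq_one_of_pow_eq_one hf) he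
  obtain ⟨c, hc⟩ := Multiset.eq_replicate_of_norm_sum_eq_card hnorm
    (by rw [← trace_eq_sum_roots_charpoly_of_splits hsplit, htr, hcard])
  have hchar : f.charpoly = (X - C c) ^ finrank ℂ V := by
    rw [hsplit.eq_prod_roots_of_monic (LinearMap.charpoly_monic f), hc, hcard]
    simp
  have hnil : IsNilpotent (f - algebraMap ℂ (End ℂ V) c) :=
    ⟨finrank ℂ V, by simpa [hchar] using LinearMap.aeval_self_charpoly f⟩
  have hss : (f - algebraMap ℂ (End ℂ V) c).IsSemisimple :=
    isSemisimple_sub_algebraMap_iff.2 (isSemisimple_of_pow_eq_one (by exact_mod_cast he) hf)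
  exact ⟨c, sub_eq_zero.1 (eq_zero_of_isNilpotent_isSemisimple hnil hss)⟩

end Module.End

theorem MonoidHom.exists_monoidHom_of_forall_eq_algebraMap {M K V : Type*} [Monoid M] [Field K]
    [AddCommGroup V] [Module K V] [Nontrivial V] (ρ : M →* Module.End K V)
    (h : ∀ m, ∃ c, ρ m = algebraMap K (Module.End K V) c) :
    ∃ ψ : M →* K, ∀ m, ρ m = algebraMap K (Module.End K V) (ψ m) := by
  choose c hc using h
  have hinj := (algebraMap K (Module.End K V)).injective
  exact ⟨{ toFun := c
           map_one' := hinj (by rw [← hc, map_one, map_one])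
           map_mul' := fun a b ↦ hinj (by rw [map_mul, ← hc, ← hc, ← hc, map_mul]) },
    hc⟩

theorem FDRep.nontrivial_of_simple {k G : Type*} [Field k] [Monoid G] (V : FDRep k G)
    [Simple V] : Nontrivial V := by
  by_contra h
  have : Subsingleton V := not_nontrivial_iff_subsingleton.1 h
  exact id_nonzero V (by ext; exact Subsingleton.elim _ _)

theorem stmt10 {G : Type} [Group G] [Fintype G] (N : Subgroup G) (hN : N.Normal)
    (V : FDRep ℂ G) [Simple V] (n : ℕ) (hn : 0 < n)
    (htriv : ∀ m ∈ N, (V.character m) ^ n = (V.character 1) ^ n) :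
    ∃ ψ : ↥N →* ℂˣ,
      (∀ (g : G) (m : G) (hm : m ∈ N),
        ψ ⟨g * m * g⁻¹, hN.conj_mem m hm g⟩ = ψ ⟨m, hm⟩) ∧
      ∀ (m : G) (hm : m ∈ N), V.character m = V.character 1 * (ψ ⟨m, hm⟩ : ℂ) := by
  have := V.nontrivial_of_simple
  have hdim : V.character 1 ≠ 0 := by simp [FDRep.char_one, Module.finrank_pos.ne']
  have hnorm : ∀ m ∈ N, ‖V.character m‖ = Module.finrank ℂ V := fun m hm ↦ by
    rw [← pow_left_inj₀ (norm_nonneg _) (Nat.cast_nonneg _) hn.ne', ← norm_pow, htriv m hm,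
      FDRep.char_one, norm_pow, Complex.norm_natCast]
  obtain ⟨ψ, hψ⟩ := (V.ρ.comp N.subtype).exists_monoidHom_of_forall_eq_algebraMap fun m ↦
    Module.End.exists_eq_algebraMap_of_pow_eq_one_of_norm_trace Fintype.card_ne_zero
      (by rw [MonoidHom.comp_apply, ← map_pow, pow_card_eq_one, map_one]) (hnorm m m.2)
  have hχ : ∀ m : N, V.character m = V.character 1 * ψ m := fun m ↦ by
    change LinearMap.trace ℂ V (V.ρ.comp N.subtype m) = _
    rw [hψ, Module.algebraMap_end_eq_smul_id, map_smul, LinearMap.trace_id, FDRep.char_one,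
      smul_eq_mul, mul_comm]
  refine ⟨ψ.toHomUnits, fun g m hm ↦ Units.ext ?_, fun m hm ↦ hχ ⟨m, hm⟩⟩
  exact mul_left_cancel₀ hdim <|
    (hχ ⟨_, hN.conj_mem m hm g⟩).symm.trans ((V.char_conj m g).trans (hχ ⟨m, hm⟩))
end

section
/- Let G be a finite group, N ⊴ G a normal subgroup, and χ an irreducible complex character of G such that the restricted character χ·χ* restricted to N equals χ(1)²·ε_N (i.e., N acts trivially on M ⊗ M* where M affords χ). Then χ|_N = χ(1)·ψ for a linear character ψ of N, and N acts trivially on M^{⊗n} where n is the order of ψ in the group of linear characters of N. -/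
/-!
For `m ∈ N` the hypothesis says `‖χ m‖ = χ 1 = dim V`. Since `ρ m` has finite order, its
eigenvalues are roots of unity, and `dim V` unit complex numbers can only sum to a number of
modulus `dim V` if they are all equal. A finite-order endomorphism is semisimple, so with a single
eigenvalue it is a scalar. Hence `N` acts on `V` through scalars, i.e. through a linear character
`ψ`, and `χ m = χ 1 * ψ m`.
-/

open Polynomial

lemma LinearMap.trace_algebraMap {K V : Type*} [Field K] [AddCommGroup V] [Module K V]
    [Module.Finite K V] (c : K) :
    LinearMap.trace K V (algebraMap K _ c) = Module.finrank K V * c := by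
  rw [Algebra.algebraMap_eq_smul_one, map_smul, LinearMap.trace_one, smul_eq_mul, mul_comm]

namespace Multiset

lemma exists_forall_eq_of_norm_sum_eq_card {s : Multiset ℂ} (hs : ∀ z ∈ s, ‖z‖ ≤ 1)
    (hsum : ‖s.sum‖ = card s) : ∃ μ, ∀ z ∈ s, z = μ := by
  rcases eq_or_ne s 0 with rfl | hs0
  · simp
  have hcard : (card s : ℂ) ≠ 0 := by simpa using hs0
  -- Rotating by `w` makes `w * s.sum` the real number `card s`, so each `(w * z).re` must be `1`.
  set w := starRingEnd ℂ s.sum / card s with hw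
  have hw_sum : w * s.sum = card s := by
    rw [hw, div_mul_eq_mul_div, mul_comm, Complex.mul_conj', hsum]
    field_simp
    push_cast
    ring
  have hw_norm : ‖w‖ = 1 := by
    rw [hw, norm_div, Complex.norm_conj, hsum, Complex.norm_natCast,
      div_self (by exact_mod_cast hcard)]
  have hre_le : ∀ z ∈ s, (w * z).re ≤ 1 := fun z hz =>
    (Complex.re_le_norm _).trans (by rw [norm_mul, hw_norm, one_mul]; exact hs z hz)
  have hre_sum : (s.map fun z => (w * z).re).sum = card s := by
    have hre_map : ∀ t : Multiset ℂ, (t.map fun z => (w * z).re).sum = (w * t.sum).re := by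
      intro t
      induction t using Multiset.induction_on with
      | empty => simp
      | cons a t ih => rw [map_cons, sum_cons, ih, sum_cons, mul_add, Complex.add_re]
    rw [hre_map, hw_sum, Complex.natCast_re]
  have hre_eq : ∀ z ∈ s, (w * z).re = 1 := by
    by_contra! ⟨z, hz, hne⟩
    have := sum_lt_sum (g := fun _ => (1 : ℝ)) hre_le
      ⟨z, hz, lt_of_le_of_ne (hre_le z hz) hne⟩
    rw [hre_sum, map_const', sum_replicate, nsmul_one] at this
    exact lt_irrefl _ this
  refine ⟨w⁻¹, fun z hz => eq_inv_of_mul_eq_one_right ?_⟩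
  have hnorm : (w * z).re = ‖w * z‖ := le_antisymm (Complex.re_le_norm _)
    (by rw [hre_eq z hz, norm_mul, hw_norm, one_mul]; exact hs z hz)
  obtain ⟨-, him⟩ := Complex.nonneg_iff.mp (Complex.re_eq_norm.mp hnorm)
  exact Complex.ext (hre_eq z hz) him.symm

end Multiset

namespace Module.End

section

variable {K V : Type*} [Field K] [AddCommGroup V] [Module K V] {f : End K V}

lemma HasEigenvalue.pow_eq_one {μ : K} (hμ : f.HasEigenvalue μ) {k : ℕ} (hf : f ^ k = 1) :
    μ ^ k = 1 := by
  obtain ⟨v, hv⟩ := hμ.exists_hasEigenvector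
  have h := hv.pow_apply k
  rw [hf, one_apply] at h
  exact smul_left_injective K hv.2 (h.symm.trans (one_smul K v).symm)

lemma isSemisimple_of_isOfFinOrder [CharZero K] (hf : IsOfFinOrder f) : f.IsSemisimple := by
  obtain ⟨k, hk, hfk⟩ := hf.exists_pow_eq_one
  refine isSemisimple_of_squarefree_aeval_eq_zero (p := X ^ k - C 1) ?_ (by simp [hfk])
  exact (X_pow_sub_one_separable_iff.mpr (by exact_mod_cast hk.ne')).squarefree

lemma IsSemisimple.eq_algebraMap_of_forall_hasEigenvalue [IsAlgClosed K] [FiniteDimensional K V]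
    (hf : f.IsSemisimple) {μ : K} (h : ∀ z, f.HasEigenvalue z → z = μ) :
    f = algebraMap K _ μ := by
  have hcard : f.charpoly.roots.card = f.charpoly.natDegree :=
    splits_iff_card_roots.mp (IsAlgClosed.splits _)
  have hroots : f.charpoly.roots = Multiset.replicate (finrank K V) μ := by
    refine Multiset.eq_replicate.mpr ⟨hcard.trans f.charpoly_natDegree, fun z hz => h z ?_⟩
    exact (hasEigenvalue_iff_isRoot_charpoly f z).mpr (isRoot_of_mem_roots hz)
  have hcharpoly : f.charpoly = (X - C μ) ^ finrank K V := by
    rw [← prod_multiset_X_sub_C_of_monic_of_roots_card_eq f.charpoly_monic hcard, hroots]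
    simp
  have hnil : IsNilpotent (f - algebraMap K _ μ) :=
    ⟨finrank K V, by simpa [hcharpoly] using f.aeval_self_charpoly⟩
  exact sub_eq_zero.mp (eq_zero_of_isNilpotent_isSemisimple hnil
    (isSemisimple_sub_algebraMap_iff.mpr hf))

end

lemma exists_eq_algebraMap_of_isOfFinOrder {V : Type*} [AddCommGroup V] [Module ℂ V]
    [FiniteDimensional ℂ V] {f : End ℂ V} (hf : IsOfFinOrder f)
    (htr : ‖LinearMap.trace ℂ V f‖ = finrank ℂ V) : ∃ μ, f = algebraMap ℂ _ μ := by
  obtain ⟨k, hk, hfk⟩ := hf.exists_pow_eq_one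
  have hsplits := IsAlgClosed.splits f.charpoly
  have hroot : ∀ z ∈ f.charpoly.roots, f.HasEigenvalue z := fun z hz =>
    (hasEigenvalue_iff_isRoot_charpoly f z).mpr (isRoot_of_mem_roots hz)
  have hnorm : ∀ z ∈ f.charpoly.roots, ‖z‖ ≤ 1 := fun z hz =>
    (Complex.norm_eq_one_of_pow_eq_one ((hroot z hz).pow_eq_one hfk) hk.ne').le
  have hsum : ‖f.charpoly.roots.sum‖ = f.charpoly.roots.card := by
    rw [← trace_eq_sum_roots_charpoly_of_splits hsplits, htr,
      splits_iff_card_roots.mp hsplits, f.charpoly_natDegree]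
  obtain ⟨μ, hμ⟩ := Multiset.exists_forall_eq_of_norm_sum_eq_card hnorm hsum
  refine ⟨μ, (isSemisimple_of_isOfFinOrder hf).eq_algebraMap_of_forall_hasEigenvalue
    fun z hz => hμ z ?_⟩
  exact (mem_roots f.charpoly_monic.ne_zero).mpr ((hasEigenvalue_iff_isRoot_charpoly f z).mp hz)

end Module.End

namespace Representation

variable {K H V : Type*} [Field K] [Group H] [AddCommGroup V] [Module K V]

lemma exists_monoidHom_of_forall_exists_eq_algebraMap (ρ : Representation K H V)
    (h : ∀ m, ∃ c, ρ m = algebraMap K _ c) :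
    ∃ ψ : H →* Kˣ, ∀ m, ρ m = algebraMap K _ (ψ m) := by
  rcases subsingleton_or_nontrivial V with _ | _
  · exact ⟨1, fun m => Subsingleton.elim _ _⟩
  choose c hc using h
  have hinj := (algebraMap K (Module.End K V)).injective
  let ψ : H →* K :=
    { toFun := c
      map_one' := hinj (by rw [← hc, map_one, map_one])
      map_mul' := fun a b => hinj (by rw [map_mul, ← hc, ← hc, ← hc, map_mul]) }
  exact ⟨ψ.toHomUnits, hc⟩

end Representation

open CategoryTheory

theorem stmt11_general {G : Type} [Group G] [Fintype G] (N : Subgroup G)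
    (V : FDRep ℂ G)
    (htriv : ∀ m ∈ N, V.character m * star (V.character m) = (V.character 1) ^ 2) :
    ∃ ψ : ↥N →* ℂˣ,
      (∀ (m : G) (hm : m ∈ N), V.character m = V.character 1 * (ψ ⟨m, hm⟩ : ℂ)) ∧
      ∀ m ∈ N, (V.character m) ^ (orderOf ψ) = (V.character 1) ^ (orderOf ψ) := by
  have hnorm : ∀ m ∈ N, ‖V.character m‖ = Module.finrank ℂ V := by
    intro m hm
    have h := htriv m hm
    rw [Complex.star_def, Complex.mul_conj', FDRep.char_one] at h
    exact (pow_left_inj₀ (norm_nonneg _) (Nat.cast_nonneg _) two_ne_zero).mp (by exact_mod_cast h)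
  obtain ⟨ψ, hψ⟩ := Representation.exists_monoidHom_of_forall_exists_eq_algebraMap
    (V.ρ.comp N.subtype)
    fun m => Module.End.exists_eq_algebraMap_of_isOfFinOrder
      (V.ρ.isOfFinOrder (isOfFinOrder_of_finite (m : G))) (hnorm m m.2)
  have hchar (m : G) (hm : m ∈ N) : V.character m = V.character 1 * ψ ⟨m, hm⟩ := by
    rw [FDRep.character, show V.ρ m = _ from hψ ⟨m, hm⟩, LinearMap.trace_algebraMap,
      FDRep.char_one]
  refine ⟨ψ, hchar, fun m hm => ?_⟩
  rw [hchar m hm, mul_pow, ← Units.val_pow_eq_pow_val, ← MonoidHom.pow_apply,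
    pow_orderOf_eq_one, MonoidHom.one_apply, Units.val_one, mul_one]

theorem stmt11 {G : Type} [Group G] [Fintype G] (N : Subgroup G) (hN : N.Normal)
    (V : FDRep ℂ G) [Simple V]
    (htriv : ∀ m ∈ N, V.character m * star (V.character m) = (V.character 1) ^ 2) :
    ∃ ψ : ↥N →* ℂˣ,
      (∀ (m : G) (hm : m ∈ N), V.character m = V.character 1 * (ψ ⟨m, hm⟩ : ℂ)) ∧
      ∀ m ∈ N, (V.character m) ^ (orderOf ψ) = (V.character 1) ^ (orderOf ψ) :=
  stmt11_general N V htriv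
end

section
/- Let G be a finite group and a ∈ R a representative of a conjugacy class, γ ∈ Irr(C_G(a)). The character of the irreducible D(G)-representation associated to (a, γ), evaluated via the formula Θ(x, l) = Σ_{g ∈ G, gag⁻¹ = x, g⁻¹lg ∈ C_G(a)} γ(g⁻¹lg)/|C_G(a)|, satisfies: Θ(x, l) = 0 unless x is conjugate to a and some conjugating element g with x = gag⁻¹ has g⁻¹lg ∈ C_G(a); and when x = gag⁻¹ and g⁻¹lg ∈ C_G(a), Θ(x, l) = γ(g⁻¹lg) (independent of the choice of such g). -/
open CategoryTheory
open scoped Classical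

/-- The character `Θ` of the irreducible `D(G)`-module attached to `(a, γ)`:
`Θ(x, l) = |C_G(a)|⁻¹ ∑_{g : g a g⁻¹ = x, g⁻¹ l g ∈ C_G(a)} γ(g⁻¹ l g)`. -/
noncomputable def thetaChar {G : Type*} [Group G] [Fintype G] (a : G)
    (γ : ↥(Subgroup.centralizer ({a} : Set G)) → ℂ) (x l : G) : ℂ :=
  (Fintype.card ↥(Subgroup.centralizer ({a} : Set G)) : ℂ)⁻¹ *
    ∑ g : G,
      if h : g * a * g⁻¹ = x ∧ g⁻¹ * l * g ∈ Subgroup.centralizer ({a} : Set G)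
      then γ ⟨g⁻¹ * l * g, h.2⟩ else 0

theorem stmt14 {G : Type} [Group G] [Fintype G] (a : G)
    (W : FDRep ℂ ↥(Subgroup.centralizer ({a} : Set G))) [Simple W] (x l : G) :
    ((¬ ∃ g : G, g * a * g⁻¹ = x ∧ g⁻¹ * l * g ∈ Subgroup.centralizer ({a} : Set G)) →
      thetaChar a W.character x l = 0) ∧
    ∀ (g : G) (hx : g * a * g⁻¹ = x)
      (hl : g⁻¹ * l * g ∈ Subgroup.centralizer ({a} : Set G)),
      thetaChar a W.character x l = W.character ⟨g⁻¹ * l * g, hl⟩ := by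
  constructor
  · intro h
    unfold thetaChar
    rw [Finset.sum_eq_zero, mul_zero]
    intro g _
    rw [dif_neg]
    exact fun hg => h ⟨g, hg⟩
  · intro g hx hl
    unfold thetaChar
    rw [← Equiv.sum_comp (Equiv.mulLeft g)]
    have hsum : ∀ c : G,
        (if h : (Equiv.mulLeft g c) * a * (Equiv.mulLeft g c)⁻¹ = x ∧
            (Equiv.mulLeft g c)⁻¹ * l * (Equiv.mulLeft g c) ∈
              Subgroup.centralizer ({a} : Set G)
         then W.character ⟨(Equiv.mulLeft g c)⁻¹ * l * (Equiv.mulLeft g c), h.2⟩ else 0) =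
        if c ∈ Subgroup.centralizer ({a} : Set G)
          then W.character ⟨g⁻¹ * l * g, hl⟩ else 0 := by
      intro c
      by_cases hc : c ∈ Subgroup.centralizer ({a} : Set G)
      · have hca : c * a = a * c := (hc a rfl).symm
        have h1 : (Equiv.mulLeft g c) * a * (Equiv.mulLeft g c)⁻¹ = x := by
          simp only [Equiv.coe_mulLeft, mul_inv_rev]
          rw [← hx, mul_assoc g c a, hca]; group
        have hmem : ((g * c)⁻¹ * l * (g * c) : G) =
            ((⟨c, hc⟩ : Subgroup.centralizer ({a} : Set G))⁻¹ * ⟨g⁻¹ * l * g, hl⟩ *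
              ⟨c, hc⟩ : Subgroup.centralizer ({a} : Set G)) := by
          simp only [Subgroup.coe_mul, Subgroup.coe_inv, mul_inv_rev]
          group
        have h2 : (Equiv.mulLeft g c)⁻¹ * l * (Equiv.mulLeft g c) ∈
            Subgroup.centralizer ({a} : Set G) := by
          simp only [Equiv.coe_mulLeft]
          rw [hmem]; exact SetLike.coe_mem _
        rw [dif_pos ⟨h1, h2⟩, if_pos hc]
        have heq : (⟨(Equiv.mulLeft g c)⁻¹ * l * (Equiv.mulLeft g c), h2⟩ :
            Subgroup.centralizer ({a} : Set G)) =
            (⟨c, hc⟩ : Subgroup.centralizer ({a} : Set G))⁻¹ * ⟨g⁻¹ * l * g, hl⟩ * ⟨c, hc⟩ := by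
          ext; simpa using hmem
        rw [heq]
        simpa using FDRep.char_conj W (⟨g⁻¹ * l * g, hl⟩ : Subgroup.centralizer ({a} : Set G))
          (⟨c, hc⟩ : Subgroup.centralizer ({a} : Set G))⁻¹
      · rw [dif_neg, if_neg hc]
        rintro ⟨h1, -⟩
        apply hc
        intro y hy
        rcases hy with rfl
        simp only [Equiv.coe_mulLeft, mul_inv_rev] at h1
        rw [← hx] at h1
        have e : g * (c * y * c⁻¹) * g⁻¹ = g * y * g⁻¹ := by rw [← h1]; group
        have h2 : c * y * c⁻¹ = y := mul_left_cancel (mul_right_cancel e)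
        exact (mul_inv_eq_iff_eq_mul.mp h2).symm
    rw [Finset.sum_congr rfl (fun c _ => hsum c), ← Finset.sum_filter,
      Finset.sum_const, ← Fintype.card_subtype, nsmul_eq_mul, ← mul_assoc,
      inv_mul_cancel₀, one_mul]
    exact_mod_cast Fintype.card_ne_zero
end
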